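/- Let ε > 0, μ > 0, and let e:[0,∞)→ℝⁿ with V(t) = ⟨Pe(t),e(t)⟩ absolutely continuous (P symmetric positive definite), satisfying (1/2)V'(t) ≤ ε(-‖e(t)‖² + μ‖ξ(t)‖²) for a.e. t ≥ 0, where ξ ∈ L²((0,∞);ℝⁿ). Then e ∈ L²((0,∞);ℝⁿ) and ‖e‖²_{L²(0,∞)} ≤ V(0)/(2ε) + μ·‖ξ‖²_{L²(0,∞)}. -/
import Mathlib


open MeasureTheory Set
open scoped RealInnerProductSpace

/-- Strong H∞ observer estimate: integrating `(1/2)V' ≤ ε(-‖e‖² + μ‖ξ‖²)`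
yields an `L²` bound on the error. -/
theorem strong_Hinfty_estimate
    {n : ℕ} (ε μ : ℝ) (hε : 0 < ε) (hμ : 0 < μ)
    (P : EuclideanSpace ℝ (Fin n) →L[ℝ] EuclideanSpace ℝ (Fin n))
    (hPsa : IsSelfAdjoint P) (hPpos : ∀ x : EuclideanSpace ℝ (Fin n), x ≠ 0 → 0 < ⟪P x, x⟫)
    (e ξ : ℝ → EuclideanSpace ℝ (Fin n)) (hecont : Continuous e)
    (V V' : ℝ → ℝ)
    (hVdef : ∀ t, V t = ⟪P (e t), e t⟫)
    (hV'int : ∀ t ≥ (0:ℝ), IntervalIntegrable V' volume 0 t)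
    (hAC : ∀ t ≥ (0:ℝ), V t = V 0 + ∫ s in (0:ℝ)..t, V' s)
    (hξL2 : IntegrableOn (fun t => ‖ξ t‖ ^ 2) (Set.Ioi 0))
    (hineq : ∀ᵐ t, 0 ≤ t → (1/2) * V' t ≤ ε * (-‖e t‖ ^ 2 + μ * ‖ξ t‖ ^ 2)) :
    IntegrableOn (fun t => ‖e t‖ ^ 2) (Set.Ioi 0) ∧
      (∫ t in Set.Ioi (0:ℝ), ‖e t‖ ^ 2) ≤
        V 0 / (2 * ε) + μ * ∫ t in Set.Ioi (0:ℝ), ‖ξ t‖ ^ 2 := by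
  have hVnn : ∀ t, 0 ≤ V t := by
    intro t
    rw [hVdef]
    rcases eq_or_ne (e t) 0 with h | h
    · simp [h]
    · exact (hPpos _ h).le
  set C : ℝ := V 0 / (2 * ε) + μ * ∫ t in Set.Ioi (0:ℝ), ‖ξ t‖ ^ 2 with hCdef
  have hξnn : (0:ℝ) ≤ ∫ t in Set.Ioi (0:ℝ), ‖ξ t‖ ^ 2 :=
    setIntegral_nonneg measurableSet_Ioi (fun t _ => by positivity)
  have hecont2 : Continuous fun t => ‖e t‖ ^ 2 := hecont.norm.pow 2
  have key : ∀ T ≥ (0:ℝ), (∫ t in (0:ℝ)..T, ‖e t‖ ^ 2) ≤ C := by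
    intro T hT
    have he_int : IntervalIntegrable (fun t => ‖e t‖ ^ 2) volume 0 T :=
      hecont2.intervalIntegrable 0 T
    have hξ_int : IntervalIntegrable (fun t => ‖ξ t‖ ^ 2) volume 0 T := by
      rw [intervalIntegrable_iff_integrableOn_Ioc_of_le hT]
      exact hξL2.mono_set Ioc_subset_Ioi_self
    have hV'i := hV'int T hT
    have hg_int : IntervalIntegrable
        (fun t => μ * ‖ξ t‖ ^ 2 - (1 / (2 * ε)) * V' t) volume 0 T :=
      (hξ_int.const_mul μ).sub (hV'i.const_mul _)
    have hmono : ∀ᵐ t ∂(volume.restrict (Set.Ioc (0:ℝ) T)),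
        ‖e t‖ ^ 2 ≤ μ * ‖ξ t‖ ^ 2 - (1 / (2 * ε)) * V' t := by
      have := ae_restrict_of_ae (s := Set.Ioc (0:ℝ) T) hineq
      filter_upwards [this, ae_restrict_mem measurableSet_Ioc] with t ht htmem
      have h1 := ht htmem.1.le
      have h2 : 1 / 2 * V' t / ε ≤ -‖e t‖ ^ 2 + μ * ‖ξ t‖ ^ 2 :=
        (div_le_iff₀ hε).mpr (by linarith)
      have h3 : 1 / (2 * ε) * V' t = 1 / 2 * V' t / ε := by
        field_simp
      linarith
    have hle : (∫ t in (0:ℝ)..T, ‖e t‖ ^ 2) ≤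
        ∫ t in (0:ℝ)..T, (μ * ‖ξ t‖ ^ 2 - (1 / (2 * ε)) * V' t) := by
      rw [intervalIntegral.integral_of_le hT, intervalIntegral.integral_of_le hT]
      exact setIntegral_mono_ae_restrict he_int.1 hg_int.1 hmono
    have hsplit : (∫ t in (0:ℝ)..T, (μ * ‖ξ t‖ ^ 2 - (1 / (2 * ε)) * V' t)) =
        μ * (∫ t in (0:ℝ)..T, ‖ξ t‖ ^ 2) - (1 / (2 * ε)) * ∫ t in (0:ℝ)..T, V' t := by
      rw [intervalIntegral.integral_sub (hξ_int.const_mul μ) (hV'i.const_mul _),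
        intervalIntegral.integral_const_mul, intervalIntegral.integral_const_mul]
    have hVint : (∫ t in (0:ℝ)..T, V' t) = V T - V 0 := by
      have := hAC T hT; linarith
    have hξle : (∫ t in (0:ℝ)..T, ‖ξ t‖ ^ 2) ≤ ∫ t in Set.Ioi (0:ℝ), ‖ξ t‖ ^ 2 := by
      rw [intervalIntegral.integral_of_le hT]
      refine setIntegral_mono_set hξL2 ?_ (HasSubset.Subset.eventuallyLE Ioc_subset_Ioi_self)
      filter_upwards with t using by positivity
    have h2ε : (0:ℝ) < 2 * ε := by linarith
    have hVT : -((1 / (2 * ε)) * (V T - V 0)) ≤ V 0 / (2 * ε) := by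
      have h := hVnn T
      have h2 : (V 0 - V T) / (2 * ε) ≤ V 0 / (2 * ε) :=
        (div_le_div_iff_of_pos_right h2ε).mpr (by linarith)
      calc -((1 / (2 * ε)) * (V T - V 0)) = (V 0 - V T) / (2 * ε) := by ring
        _ ≤ V 0 / (2 * ε) := h2
    rw [hsplit, hVint] at hle
    rw [hCdef]
    linarith [mul_le_mul_of_nonneg_left hξle hμ.le, hVT]
  have hint : IntegrableOn (fun t => ‖e t‖ ^ 2) (Set.Ioi 0) := by
    refine integrableOn_Ioi_of_intervalIntegral_norm_bounded (b := fun T : ℝ => T)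
      (l := Filter.atTop) C 0 (fun T => (hecont2.integrableOn_Ioc)) Filter.tendsto_id ?_
    filter_upwards [Filter.eventually_ge_atTop (0:ℝ)] with T hT
    have : (fun t => ‖(‖e t‖ ^ 2 : ℝ)‖) = fun t => ‖e t‖ ^ 2 := by
      funext t; rw [Real.norm_eq_abs, abs_of_nonneg (by positivity)]
    calc (∫ x in (0:ℝ)..T, ‖(‖e x‖ ^ 2 : ℝ)‖) = ∫ x in (0:ℝ)..T, ‖e x‖ ^ 2 := by rw [this]
      _ ≤ C := key T hT
  refine ⟨hint, ?_⟩
  have htend : Filter.Tendsto (fun T : ℝ => ∫ t in (0:ℝ)..T, ‖e t‖ ^ 2) Filter.atTop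
      (nhds (∫ t in Set.Ioi (0:ℝ), ‖e t‖ ^ 2)) :=
    intervalIntegral_tendsto_integral_Ioi 0 hint Filter.tendsto_id
  exact le_of_tendsto htend <| by
    filter_upwards [Filter.eventually_ge_atTop (0:ℝ)] with T hT using key T hT
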